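/- arXiv:2403.03337 — 4 statements merged into one kernel-verified Lean document; each statement's English description precedes it below -/
import Mathlib

section
/- Let k be a positive integer, i ∈ {1,...,k-1}, and let α_1,...,α_{i+1} be nonnegative reals each at most k. Define ᾱ_j = (1/j)·∑_{l=1}^{j} α_l. Then (1 - ᾱ_i/k)^i · (1 - α_{i+1}/k) ≤ (1 - ᾱ_{i+1}/k)^{i+1}. -/
open Real

lemma aux_amgm (i : ℕ) (x y : ℝ) (hx : 0 ≤ x) (hy : 0 ≤ y) :
    x ^ i * y ≤ (((i : ℝ) * x + y) / (i + 1)) ^ (i + 1) := by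
  have hn : (0:ℝ) < (i:ℝ) + 1 := by positivity
  have hw1 : (0:ℝ) ≤ (i:ℝ) / ((i:ℝ)+1) := by positivity
  have hw2 : (0:ℝ) ≤ 1 / ((i:ℝ)+1) := by positivity
  have hsum : (i:ℝ) / ((i:ℝ)+1) + 1 / ((i:ℝ)+1) = 1 := by field_simp
  have h := Real.geom_mean_le_arith_mean2_weighted hw1 hw2 hx hy hsum
  have hL : 0 ≤ x ^ ((i:ℝ)/((i:ℝ)+1)) * y ^ ((1:ℝ)/((i:ℝ)+1)) := by positivity
  have h2 := Real.rpow_le_rpow hL h (le_of_lt hn)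
  have hLrw : (x ^ ((i:ℝ)/((i:ℝ)+1)) * y ^ ((1:ℝ)/((i:ℝ)+1))) ^ ((i:ℝ)+1)
      = x ^ i * y := by
    rw [Real.mul_rpow (by positivity) (by positivity),
        ← Real.rpow_natCast x i, ← Real.rpow_mul hx, ← Real.rpow_mul hy]
    have e1 : (i:ℝ)/((i:ℝ)+1) * ((i:ℝ)+1) = (i:ℝ) := by field_simp
    have e2 : (1:ℝ)/((i:ℝ)+1) * ((i:ℝ)+1) = 1 := by field_simp
    rw [e1, e2, Real.rpow_one]
  have hRrw : ((i:ℝ)/((i:ℝ)+1) * x + 1/((i:ℝ)+1) * y) ^ ((i:ℝ)+1)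
      = (((i:ℝ) * x + y) / ((i:ℝ)+1)) ^ (i+1) := by
    have : (i:ℝ)/((i:ℝ)+1) * x + 1/((i:ℝ)+1) * y = ((i:ℝ) * x + y) / ((i:ℝ)+1) := by ring
    rw [this, ← Real.rpow_natCast (((i:ℝ)*x+y)/((i:ℝ)+1)) (i+1)]
    push_cast
    ring_nf
  rw [hLrw, hRrw] at h2
  exact_mod_cast h2

theorem stmt_1 (k : ℕ) (hk : 0 < k) (i : ℕ) (hi1 : 1 ≤ i) (hik : i ≤ k - 1)
    (α : ℕ → ℝ) (hα : ∀ j ∈ Finset.Icc 1 (i + 1), 0 ≤ α j ∧ α j ≤ k) :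
    (1 - ((∑ l ∈ Finset.Icc 1 i, α l) / i) / k) ^ i * (1 - α (i + 1) / k) ≤
      (1 - ((∑ l ∈ Finset.Icc 1 (i + 1), α l) / (i + 1)) / k) ^ (i + 1) := by
  have hkR : (0:ℝ) < k := by exact_mod_cast hk
  have hiR : (0:ℝ) < i := by exact_mod_cast hi1
  set x : ℝ := 1 - ((∑ l ∈ Finset.Icc 1 i, α l) / i) / k with hxdef
  set y : ℝ := 1 - α (i + 1) / k with hydef
  have hx : 0 ≤ x := by
    have hsum : ∑ l ∈ Finset.Icc 1 i, α l ≤ ∑ l ∈ Finset.Icc 1 i, (k:ℝ) := by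
      apply Finset.sum_le_sum
      intro l hl
      exact (hα l (Finset.mem_Icc.mpr ⟨(Finset.mem_Icc.mp hl).1,
        le_trans (Finset.mem_Icc.mp hl).2 (Nat.le_succ i)⟩)).2
    have : ∑ l ∈ Finset.Icc 1 i, (k:ℝ) = i * k := by
      simp [Finset.sum_const, Nat.card_Icc, mul_comm]
    rw [hxdef]
    have : (∑ l ∈ Finset.Icc 1 i, α l) / i / k ≤ 1 := by
      rw [div_le_one hkR, div_le_iff₀ hiR]
      calc ∑ l ∈ Finset.Icc 1 i, α l ≤ i * k := by rw [← this]; exact hsum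
        _ = k * i := by ring
    linarith
  have hy : 0 ≤ y := by
    have := (hα (i+1) (Finset.mem_Icc.mpr ⟨by omega, le_refl _⟩)).2
    rw [hydef]
    have : α (i+1) / k ≤ 1 := by rw [div_le_one hkR]; exact this
    linarith
  have key := aux_amgm i x y hx hy
  have heq : ((i:ℝ) * x + y) / (i + 1)
      = 1 - ((∑ l ∈ Finset.Icc 1 (i + 1), α l) / (i + 1)) / k := by
    rw [hxdef, hydef]
    have hsplit : ∑ l ∈ Finset.Icc 1 (i + 1), α l
        = (∑ l ∈ Finset.Icc 1 i, α l) + α (i+1) := by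
      rw [← Finset.sum_Icc_succ_top (by omega : 1 ≤ i + 1)]
    rw [hsplit]
    field_simp
    ring
  rw [heq] at key
  exact key
end

section
/- Let k be a positive integer, C ≥ 0 (the optimal coverage), β ≥ 0, and let α_1,...,α_k, ω_1,...,ω_k be nonnegative reals with α_j ≤ k for all j. Suppose that for every i ∈ {1,...,k}, ω_i ≥ α_i·(C - ∑_{j=1}^{i-1} ω_j)/k - β. Then for every i ∈ {1,...,k}, ∑_{j=1}^{i} ω_j ≥ (1 - (1 - ᾱ_i/k)^i)·C - i·β, where ᾱ_i = (1/i)·∑_{j=1}^{i} α_j. -/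
/-!
Writing `S` for the coverage after `n` steps and `y = 1 - α_{n+1}/k`, approximate greediness gives
`S + ω_{n+1} ≥ y S + (1 - y) C - β`. Feeding in the bound for `S`, with `x = 1 - ᾱ_n/k`, the loss
factor of `C` becomes `x^n y`, and AM-GM bounds it by `((n x + y)/(n + 1))^(n+1)`, whose base is
exactly `1 - ᾱ_{n+1}/k`.
-/

open Finset

theorem sub_pow_mul_add_le_pow_succ (n : ℕ) {m d : ℝ} (h₁ : 0 ≤ m - d) (h₂ : 0 ≤ m + n * d) :
    (m - d) ^ n * (m + n * d) ≤ m ^ (n + 1) := by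
  induction n with
  | zero => simp
  | succ n ih =>
    push_cast at h₂
    have hm : 0 ≤ m := by nlinarith
    have hmid : 0 ≤ m + n * d := by nlinarith
    calc (m - d) ^ (n + 1) * (m + (n + 1 : ℕ) * d)
        = (m - d) ^ n * ((m - d) * (m + (n + 1) * d)) := by push_cast; ring
      _ ≤ (m - d) ^ n * (m * (m + n * d)) := by
          refine mul_le_mul_of_nonneg_left ?_ (pow_nonneg h₁ n)
          nlinarith [sq_nonneg d]
      _ = m * ((m - d) ^ n * (m + n * d)) := by ring
      _ ≤ m * m ^ (n + 1) := mul_le_mul_of_nonneg_left (ih hmid) hm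
      _ = m ^ (n + 1 + 1) := by ring

theorem pow_mul_le_weighted_mean_pow (n : ℕ) {x y : ℝ} (hx : 0 ≤ x) (hy : 0 ≤ y) :
    x ^ n * y ≤ ((n * x + y) / (n + 1)) ^ (n + 1) := by
  set m := (n * x + y) / (n + 1)
  have hm : (n + 1) * m = n * x + y := by simp only [m]; field_simp
  have key := sub_pow_mul_add_le_pow_succ n (m := m) (d := m - x) (by linarith) (by linarith)
  rwa [sub_sub_cancel, show m + n * (m - x) = y by linarith] at key

theorem one_sub_average_div_succ (f : ℕ → ℝ) (n : ℕ) (c : ℝ) :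
    (n * (1 - (∑ j ∈ Icc 1 n, f j) / n / c) + (1 - f (n + 1) / c)) / (n + 1)
      = 1 - (∑ j ∈ Icc 1 (n + 1), f j) / (n + 1 : ℕ) / c := by
  have hcancel : (n : ℝ) * ((∑ j ∈ Icc 1 n, f j) / n / c) = (∑ j ∈ Icc 1 n, f j) / c := by
    rcases n.eq_zero_or_pos with rfl | hn
    · simp
    · rw [div_right_comm, mul_div_cancel₀ _ (by positivity)]
  rw [mul_one_sub, hcancel, sum_Icc_succ_top (by omega : 1 ≤ n + 1),
    div_right_comm _ ((n + 1 : ℕ) : ℝ), add_div]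
  push_cast
  field_simp
  ring

theorem approx_greedy_step {C β S ω x y : ℝ} (n : ℕ) (hC : 0 ≤ C) (hβ : 0 ≤ β) (hx : 0 ≤ x)
    (hy₀ : 0 ≤ y) (hy₁ : y ≤ 1) (hS : (1 - x ^ n) * C - n * β ≤ S)
    (hω : (1 - y) * (C - S) - β ≤ ω) :
    (1 - ((n * x + y) / (n + 1)) ^ (n + 1)) * C - (n + 1) * β ≤ S + ω := by
  have hamgm := mul_le_mul_of_nonneg_left (pow_mul_le_weighted_mean_pow n hx hy₀) hC
  have hyS := mul_le_mul_of_nonneg_left hS hy₀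
  have hnβ : 0 ≤ n * β * (1 - y) := by have := sub_nonneg.2 hy₁; positivity
  linarith

theorem sum_ge_of_approx_greedy (k : ℕ) (C β : ℝ) (hC : 0 ≤ C) (hβ : 0 ≤ β) (α ω : ℕ → ℝ)
    (hα0 : ∀ j ∈ Icc 1 k, 0 ≤ α j) (hαk : ∀ j ∈ Icc 1 k, α j ≤ k)
    (hgreedy : ∀ i ∈ Icc 1 k, ω i ≥ α i * (C - ∑ j ∈ Icc 1 (i - 1), ω j) / k - β) (i : ℕ)
    (hik : i ≤ k) :
    (1 - (1 - (∑ j ∈ Icc 1 i, α j) / i / k) ^ i) * C - i * β ≤ ∑ j ∈ Icc 1 i, ω j := by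
  induction i with
  | zero => simp
  | succ i ih =>
    have hmem : i + 1 ∈ Icc 1 k := mem_Icc.2 ⟨by omega, hik⟩
    have hα_sum : ∑ j ∈ Icc 1 i, α j ≤ i * k := by
      calc ∑ j ∈ Icc 1 i, α j ≤ ∑ j ∈ Icc 1 i, (k : ℝ) :=
            sum_le_sum fun j hj => hαk j (Icc_subset_Icc_right (by omega) hj)
        _ = i * k := by simp
    have hx : 0 ≤ 1 - (∑ j ∈ Icc 1 i, α j) / i / k :=
      sub_nonneg.2 <| div_le_one_of_le₀
        (div_le_of_le_mul₀ i.cast_nonneg k.cast_nonneg (by linarith)) k.cast_nonneg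
    have hy₀ : 0 ≤ 1 - α (i + 1) / k :=
      sub_nonneg.2 (div_le_one_of_le₀ (hαk _ hmem) k.cast_nonneg)
    have hy₁ : 1 - α (i + 1) / k ≤ 1 := sub_le_self _ (div_nonneg (hα0 _ hmem) k.cast_nonneg)
    have hω : (1 - (1 - α (i + 1) / k)) * (C - ∑ j ∈ Icc 1 i, ω j) - β ≤ ω (i + 1) := by
      simpa [mul_div_right_comm] using hgreedy _ hmem
    rw [← one_sub_average_div_succ, sum_Icc_succ_top (by omega : 1 ≤ i + 1)]
    push_cast
    exact approx_greedy_step i hC hβ hx hy₀ hy₁ (ih (by omega)) hω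

theorem stmt_2_general (k : ℕ) (C β : ℝ) (hC : 0 ≤ C) (hβ : 0 ≤ β)
    (α ω : ℕ → ℝ)
    (hα0 : ∀ j ∈ Finset.Icc 1 k, 0 ≤ α j) (hαk : ∀ j ∈ Finset.Icc 1 k, α j ≤ k)
    (hgreedy : ∀ i ∈ Finset.Icc 1 k,
      ω i ≥ α i * (C - ∑ j ∈ Finset.Icc 1 (i - 1), ω j) / k - β) :
    ∀ i ∈ Finset.Icc 1 k,
      ∑ j ∈ Finset.Icc 1 i, ω j ≥
        (1 - (1 - ((∑ j ∈ Finset.Icc 1 i, α j) / i) / k) ^ i) * C - i * β :=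
  fun i hi => sum_ge_of_approx_greedy k C β hC hβ α ω hα0 hαk hgreedy i (mem_Icc.1 hi).2

theorem stmt_2 (k : ℕ) (hk : 0 < k) (C β : ℝ) (hC : 0 ≤ C) (hβ : 0 ≤ β)
    (α ω : ℕ → ℝ)
    (hα0 : ∀ j ∈ Finset.Icc 1 k, 0 ≤ α j) (hαk : ∀ j ∈ Finset.Icc 1 k, α j ≤ k)
    (hω0 : ∀ j ∈ Finset.Icc 1 k, 0 ≤ ω j)
    (hgreedy : ∀ i ∈ Finset.Icc 1 k,
      ω i ≥ α i * (C - ∑ j ∈ Finset.Icc 1 (i - 1), ω j) / k - β) :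
    ∀ i ∈ Finset.Icc 1 k,
      ∑ j ∈ Finset.Icc 1 i, ω j ≥
        (1 - (1 - ((∑ j ∈ Finset.Icc 1 i, α j) / i) / k) ^ i) * C - i * β :=
  stmt_2_general k C β hC hβ α ω hα0 hαk hgreedy
end

section
/- Suppose an algorithm A for Max Cover is (α, β)-prefix optimal with all α_i such that ᾱ_k ≥ α. Then the coverage of the first k sets chosen by A satisfies cov(A) ≥ (1 - exp(-ᾱ_k))·OPT - β·k, where OPT is the maximum coverage achievable by any k sets. -/
theorem stmt_16 {U : Type*} [DecidableEq U]
    (𝒮 : Finset (Finset U)) (k : ℕ) (hk : 0 < k)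
    (S : ℕ → Finset U) (hS : ∀ i < k, S i ∈ 𝒮)
    (α : ℕ → ℝ) (β : ℝ) (hβ : 0 ≤ β)
    (hα0 : ∀ i < k, 0 ≤ α (i + 1)) (hα1 : ∀ i < k, α (i + 1) ≤ 1)
    (hprefix : ∀ i < k, ∀ T ∈ 𝒮,
      ((S i \ (Finset.range i).biUnion S).card : ℝ) ≥
        α (i + 1) * ((T \ (Finset.range i).biUnion S).card : ℝ) - β)
    (OPT : ℕ)
    (hOPT : ∃ T : Fin k → Finset U, (∀ j, T j ∈ 𝒮) ∧
      (Finset.univ.biUnion T).card = OPT) :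
    (((Finset.range k).biUnion S).card : ℝ) ≥
      (1 - Real.exp (-((∑ j ∈ Finset.Icc 1 k, α j) / k))) * OPT - β * k := by
  obtain ⟨T, hT, hTcard⟩ := hOPT
  have hkpos : (0:ℝ) < k := by exact_mod_cast hk
  set cov : ℕ → Finset U := fun i => (Finset.range i).biUnion S with hcovdef
  have hexist : ∀ i, ∃ T' ∈ 𝒮, (OPT:ℝ) - (cov i).card ≤ k * ((T' \ cov i).card) := by
    intro i
    have hne : (Finset.univ : Finset (Fin k)).Nonempty := by
      have : Nonempty (Fin k) := ⟨⟨0, hk⟩⟩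
      exact Finset.univ_nonempty
    obtain ⟨j₀, _, hj₀⟩ := Finset.exists_max_image Finset.univ
      (fun j => ((T j \ cov i).card)) hne
    refine ⟨T j₀, hT j₀, ?_⟩
    have hsub : (Finset.univ.biUnion T) \ cov i ⊆
        Finset.univ.biUnion (fun j => T j \ cov i) := by
      intro x hx
      simp only [Finset.mem_sdiff, Finset.mem_biUnion] at hx ⊢
      obtain ⟨⟨j, _, hxj⟩, hxc⟩ := hx
      exact ⟨j, Finset.mem_univ j, hxj, hxc⟩
    have h1 : ((Finset.univ.biUnion T) \ cov i).card ≤ ∑ j, (T j \ cov i).card :=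
      le_trans (Finset.card_le_card hsub) Finset.card_biUnion_le
    have h2 : ∑ j, (T j \ cov i).card ≤ k * (T j₀ \ cov i).card := by
      calc ∑ j, (T j \ cov i).card
          ≤ ∑ _j : Fin k, (T j₀ \ cov i).card :=
            Finset.sum_le_sum fun j _ => hj₀ j (Finset.mem_univ j)
        _ = k * (T j₀ \ cov i).card := by
            simp [Finset.sum_const, Finset.card_univ, mul_comm]
    have h3 : (Finset.univ.biUnion T).card ≤
        ((Finset.univ.biUnion T) \ cov i).card + (cov i).card :=
      Finset.card_le_card_sdiff_add_card
    have : OPT ≤ k * (T j₀ \ cov i).card + (cov i).card := by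
      omega
    have := (Nat.cast_le (α := ℝ)).mpr this
    push_cast at this
    linarith
  have main : ∀ i ≤ k, (OPT:ℝ) - (cov i).card ≤
      (∏ j ∈ Finset.range i, (1 - α (j+1) / k)) * OPT + i * β := by
    intro i hi
    induction i with
    | zero => simp [cov]
    | succ n ih =>
      have hn : n < k := hi
      have ihn := ih (le_of_lt hn)
      have ha0 := hα0 n hn
      have ha1 := hα1 n hn
      have hdiv0 : 0 ≤ α (n+1) / k := div_nonneg ha0 (le_of_lt hkpos)
      have hdiv1 : α (n+1) / k ≤ 1 := by
        rw [div_le_one hkpos]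
        have : (1:ℝ) ≤ k := by exact_mod_cast hk
        linarith
      obtain ⟨T', hT', hT'card⟩ := hexist n
      have hpre := hprefix n hn T' hT'
      have hcovsucc : ((cov (n+1)).card : ℝ) = (cov n).card + ((S n \ cov n).card : ℝ) := by
        have he : cov (n+1) = S n ∪ cov n := by
          simp [hcovdef, Finset.range_add_one, Finset.biUnion_insert]
        have := Finset.card_sdiff_add_card (s := S n) (t := cov n)
        rw [he, ← this]
        push_cast
        ring
      have hmarg : α (n+1) * ((T' \ cov n).card : ℝ) ≥
          (α (n+1) / k) * ((OPT:ℝ) - (cov n).card) := by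
        have h : ((OPT:ℝ) - (cov n).card) / k ≤ ((T' \ cov n).card : ℝ) := by
          rw [div_le_iff₀ hkpos]
          linarith [hT'card]
        have := mul_le_mul_of_nonneg_left h ha0
        calc (α (n+1) / k) * ((OPT:ℝ) - (cov n).card)
            = α (n+1) * (((OPT:ℝ) - (cov n).card) / k) := by ring
          _ ≤ α (n+1) * ((T' \ cov n).card : ℝ) := this
      have hstep : (OPT:ℝ) - (cov (n+1)).card ≤
          (1 - α (n+1)/k) * ((OPT:ℝ) - (cov n).card) + β := by
        have : ((S n \ cov n).card : ℝ) ≥ (α (n+1)/k) * ((OPT:ℝ) - (cov n).card) - β := by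
          linarith [hpre, hmarg]
        rw [hcovsucc]
        nlinarith
      have hPnonneg : 0 ≤ ∏ j ∈ Finset.range n, (1 - α (j+1) / k) := by
        apply Finset.prod_nonneg
        intro j hj
        have hjk : j < k := lt_of_lt_of_le (Finset.mem_range.mp hj) (le_of_lt hn)
        have : α (j+1) / k ≤ 1 := by
          rw [div_le_one hkpos]
          have : (1:ℝ) ≤ k := by exact_mod_cast hk
          linarith [hα1 j hjk]
        linarith
      rw [Finset.prod_range_succ]
      have hOPTnn : (0:ℝ) ≤ OPT := Nat.cast_nonneg _
      push_cast
      nlinarith [mul_le_mul_of_nonneg_left ihn (by linarith : (0:ℝ) ≤ 1 - α (n+1)/k),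
        mul_nonneg (by exact_mod_cast Nat.zero_le n : (0:ℝ) ≤ n) hβ]
  have hfinal := main k le_rfl
  have hP : (∏ j ∈ Finset.range k, (1 - α (j+1)/k)) ≤
      Real.exp (-((∑ j ∈ Finset.Icc 1 k, α j)/k)) := by
    have hsum : ∑ j ∈ Finset.Icc 1 k, α j = ∑ j ∈ Finset.range k, α (j+1) := by
      rw [← Finset.Ico_add_one_right_eq_Icc, Finset.sum_Ico_eq_sum_range]
      simp [add_comm]
    rw [hsum, ← neg_div]
    have : Real.exp (-(∑ j ∈ Finset.range k, α (j+1)) / k) =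
        ∏ j ∈ Finset.range k, Real.exp (-(α (j+1)/k)) := by
      rw [← Real.exp_sum]
      congr 1
      rw [neg_div, Finset.sum_div, ← Finset.sum_neg_distrib]
    rw [this]
    apply Finset.prod_le_prod
    · intro j hj
      have hjk : j < k := Finset.mem_range.mp hj
      have : α (j+1) / k ≤ 1 := by
        rw [div_le_one hkpos]
        have h1 : (1:ℝ) ≤ k := by exact_mod_cast hk
        linarith [hα1 j hjk]
      linarith
    · intro j hj
      have := Real.add_one_le_exp (-(α (j+1)/k))
      linarith
  have hOPTnn : (0:ℝ) ≤ OPT := Nat.cast_nonneg _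
  show ((cov k).card : ℝ) ≥ _
  nlinarith [mul_le_mul_of_nonneg_right hP hOPTnn]
end

section
/- Consider a vertex cover instance on the complete set of possible graphs on vertex set V, |V| = n, and let M be a randomized algorithm that on every input graph outputs a vertex cover of that graph with probability 1. Suppose M satisfies ε-edge differential privacy for some finite ε > 0 (neighboring graphs differ in one edge). Then for every pair of distinct vertices u, v ∈ V and every input graph G, the output of M(G) contains u or v with probability 1. Consequently, M outputs at least n-1 vertices with probability 1 on every input. -/
/-!
If the edge `s(u, v)` is present, correctness forces every output to contain `u` or `v`, i.e.
the event "neither `u` nor `v`" is null. Adding or removing that one edge changes the probability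
of any event by at most a multiplicative factor, so the event is null on every graph as well. A set
meeting every pair of distinct vertices misses at most one vertex.
-/

/-- `C` is a vertex cover of the graph with edge set `G`. -/
def IsVertexCover {V : Type*} (G : Finset (Sym2 V)) (C : Finset V) : Prop :=
  ∀ e ∈ G, ∃ v ∈ C, v ∈ e

open Finset
open scoped ENNReal symmDiff

lemma IsVertexCover.mem_or_mem {V : Type*} {G : Finset (Sym2 V)} {C : Finset V} {u v : V}
    (hC : IsVertexCover G C) (huv : s(u, v) ∈ G) : u ∈ C ∨ v ∈ C := by
  obtain ⟨w, hw, hwe⟩ := hC _ huv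
  rcases Sym2.mem_iff.mp hwe with rfl | rfl
  exacts [Or.inl hw, Or.inr hw]

lemma Finset.card_symmDiff_insert_of_notMem {α : Type*} [DecidableEq α] {s : Finset α} {a : α}
    (h : a ∉ s) : (s ∆ insert a s).card = 1 := by
  rw [symmDiff_of_le (subset_insert a s), insert_sdiff_of_notMem s h, sdiff_self,
    bot_eq_empty, insert_empty, card_singleton]

lemma PMF.support_subset_iff_toOuterMeasure_compl_eq_zero {α : Type*} (p : PMF α) (s : Set α) :
    p.support ⊆ s ↔ p.toOuterMeasure sᶜ = 0 := by
  rw [toOuterMeasure_apply_eq_zero_iff, Set.disjoint_compl_right_iff_subset]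

lemma support_subset_mem_or_mem_of_isVertexCover {V : Type*} [DecidableEq V]
    (M : Finset (Sym2 V) → PMF (Finset V)) (c : ℝ≥0∞)
    (hcorrect : ∀ G, (M G).support ⊆ {C | IsVertexCover G C})
    (hDP : ∀ G₁ G₂ : Finset (Sym2 V), (G₁ ∆ G₂).card = 1 →
      ∀ S, (M G₁).toOuterMeasure S ≤ c * (M G₂).toOuterMeasure S)
    (u v : V) (G : Finset (Sym2 V)) : (M G).support ⊆ {C | u ∈ C ∨ v ∈ C} := by
  have hcover : (M (insert s(u, v) G)).support ⊆ {C | u ∈ C ∨ v ∈ C} := fun C hC =>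
    (hcorrect _ hC).mem_or_mem (mem_insert_self _ _)
  by_cases he : s(u, v) ∈ G
  · rwa [insert_eq_of_mem he] at hcover
  · rw [PMF.support_subset_iff_toOuterMeasure_compl_eq_zero] at hcover ⊢
    simpa [hcover] using hDP _ _ (card_symmDiff_insert_of_notMem he) {C | u ∈ C ∨ v ∈ C}ᶜ

lemma Finset.card_sub_one_le_card_of_forall_mem_or_mem {α : Type*} [Fintype α] [DecidableEq α]
    {C : Finset α} (h : ∀ u v, u ≠ v → u ∈ C ∨ v ∈ C) : Fintype.card α - 1 ≤ C.card := by
  have hcompl : Cᶜ.card ≤ 1 := card_le_one.mpr fun a ha b hb => by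
    by_contra hab
    rcases h a b hab with h | h
    exacts [mem_compl.mp ha h, mem_compl.mp hb h]
  have := card_add_card_compl C
  omega

theorem stmt_17 {V : Type*} [Fintype V] [DecidableEq V]
    (M : Finset (Sym2 V) → PMF (Finset V)) (ε : ℝ)
    (hcorrect : ∀ G : Finset (Sym2 V),
      (M G).toOuterMeasure {C | IsVertexCover G C} = 1)
    (hDP : ∀ G₁ G₂ : Finset (Sym2 V), (symmDiff G₁ G₂).card = 1 →
      ∀ S : Set (Finset V),
        (M G₁).toOuterMeasure S ≤ ENNReal.ofReal (Real.exp ε) * (M G₂).toOuterMeasure S) :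
    (∀ u v : V, u ≠ v → ∀ G : Finset (Sym2 V),
      (M G).toOuterMeasure {C | u ∈ C ∨ v ∈ C} = 1) ∧
    (∀ G : Finset (Sym2 V),
      (M G).toOuterMeasure {C | Fintype.card V - 1 ≤ C.card} = 1) := by
  simp only [PMF.toOuterMeasure_apply_eq_one_iff] at hcorrect ⊢
  have hpair := support_subset_mem_or_mem_of_isVertexCover M _ hcorrect hDP
  exact ⟨fun u v _ G => hpair u v G, fun G C hC =>
    card_sub_one_le_card_of_forall_mem_or_mem fun u v _ => hpair u v G hC⟩
end
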